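/- arXiv:2506.17662 — 6 statements merged into one kernel-verified Lean document; each statement's English description precedes it below -/
import Mathlib

section
/- Let p_n ∈ ℤ[z] be defined by p_0 = 0 and p_{n+1} = p_n^2 + z, and for ℓ, n ∈ ℕ set q_{ℓ,n} = p_{ℓ+n} − p_ℓ. Then for every ℓ ∈ ℕ and every n ≥ 1, over ℂ one has the complete factorization q_{ℓ,n}(z) = ∏_{k | n} ( h_k(z)^{η_ℓ(k)} · ∏_{j=2}^{ℓ} m_{j,k}(z) ), where η_ℓ(k) = ⌊(ℓ−1)/k⌋ + 2 (with the conventions η_0(k) = 1 and η_1(k) = 2, i.e. the floor is taken in ℤ). -/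
open Polynomial

/-- The polynomials `p n` defined by `p 0 = 0`, `p (n+1) = p n ^ 2 + X`. -/
noncomputable def P : ℕ → Polynomial ℤ
  | 0 => 0
  | n + 1 => P n ^ 2 + X

/-- The Misiurewicz–Thurston polynomials `q l n = p (l + n) - p l`. -/
noncomputable def Q (l n : ℕ) : Polynomial ℤ := P (l + n) - P l

/-- `p n` viewed over `ℂ`. -/
noncomputable def pC (n : ℕ) : Polynomial ℂ := (P n).map (Int.castRingHom ℂ)

/-- `q l n` viewed over `ℂ`. -/
noncomputable def qC (l n : ℕ) : Polynomial ℂ := (Q l n).map (Int.castRingHom ℂ)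

/-- Hyperbolic centers of order `n`: roots of `p n` that are not roots of `p k`
for any strict divisor `k` of `n`. -/
def hyp (n : ℕ) : Set ℂ :=
  {z | (pC n).eval z = 0 ∧ ∀ k : ℕ, k ∣ n → k ≠ n → (pC k).eval z ≠ 0}

/-- Misiurewicz points of type `(l, n)`. -/
def mis (l n : ℕ) : Set ℂ :=
  {z | (qC l n).eval z = 0 ∧ (qC (l - 1) n).eval z ≠ 0 ∧
    ∀ k : ℕ, k ∣ n → k ≠ n → (qC l k).eval z ≠ 0}

/-- Gleason's polynomial `h n = ∏_{r ∈ hyp n} (X - r)`. -/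
noncomputable def hPoly (n : ℕ) : Polynomial ℂ := ∏ᶠ r ∈ hyp n, (X - C r)

/-- Reduced Misiurewicz polynomial `m l n = ∏_{r ∈ mis l n} (X - r)`. -/
noncomputable def mPoly (l n : ℕ) : Polynomial ℂ := ∏ᶠ r ∈ mis l n, (X - C r)

/-- The multiplicity `η l k = ⌊(l - 1)/k⌋ + 2`, with the conventions
`η 0 k = 1` (floor taken in `ℤ`) and `η 1 k = 2`. -/
def eta (l k : ℕ) : ℕ := if l = 0 then 1 else (l - 1) / k + 2


/-! ## Auxiliary development -/

-- basic
lemma P_zero : P 0 = 0 := rfl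
lemma P_succ (n : ℕ) : P (n+1) = P n ^ 2 + X := rfl
lemma P_one : P 1 = X := by simp [P_succ, P_zero]

lemma P_natDegree : ∀ n : ℕ, (P (n+1)).natDegree = 2^n ∧ (P (n+1)).Monic := by
  intro n
  induction n with
  | zero => simp [P_one, monic_X]
  | succ n ih =>
    obtain ⟨hd, hm⟩ := ih
    have hsq : (P (n+1) ^ 2).Monic := hm.pow 2
    have hdsq : (P (n+1) ^ 2).natDegree = 2^(n+1) := by
      rw [hm.natDegree_pow, hd]; ring
    have hlt : (X : Polynomial ℤ).degree < (P (n+1) ^ 2).degree := by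
      rw [degree_X, degree_eq_natDegree hsq.ne_zero, hdsq]
      exact_mod_cast Nat.one_lt_two_pow_iff.mpr (Nat.succ_ne_zero n)
    constructor
    · rw [show P (n+1+1) = P (n+1) ^ 2 + X from rfl, natDegree_add_eq_left_of_degree_lt hlt, hdsq]
    · rw [show P (n+1+1) = P (n+1) ^ 2 + X from rfl]; exact hsq.add_of_left hlt

lemma P_monic {n : ℕ} (hn : 1 ≤ n) : (P n).Monic := by
  obtain ⟨m, rfl⟩ := Nat.exists_eq_add_of_le hn
  have := (P_natDegree m).2
  rwa [Nat.add_comm] at this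

lemma P_natDeg {n : ℕ} (hn : 1 ≤ n) : (P n).natDegree = 2^(n-1) := by
  obtain ⟨m, rfl⟩ := Nat.exists_eq_add_of_le hn
  simpa [Nat.add_comm] using (P_natDegree m).1

/-- `S l n = P (l+n) + P l` over ℤ. -/
noncomputable def SZ (l n : ℕ) : Polynomial ℤ := P (l + n) + P l

lemma SZ_monic {l n : ℕ} (hl : 1 ≤ l) (hn : 1 ≤ n) : (SZ l n).Monic := by
  have h1 : (P (l+n)).Monic := P_monic (by omega)
  have hdlt : (P l).degree < (P (l+n)).degree := by
    rw [degree_eq_natDegree (P_monic hl).ne_zero,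
      degree_eq_natDegree h1.ne_zero, P_natDeg hl, P_natDeg (by omega : 1 ≤ l + n)]
    exact_mod_cast Nat.pow_lt_pow_right (by norm_num) (by omega)
  exact h1.add_of_left hdlt

lemma Q_succ (l n : ℕ) : Q (l+1) n = Q l n * SZ l n := by
  have : P (l + 1 + n) = P ((l + n) + 1) := by ring_nf
  rw [Q, Q, SZ, this, P_succ, P_succ]
  ring

/-! ### Algebraic integer facts -/

lemma half_lemma {x : ℂ} (hx : IsIntegral ℤ x) (h : 1 + 2 * x = 0) : False := by
  have hxq : x = algebraMap ℚ ℂ (-(1/2)) := by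
    have h2 : (2:ℂ) ≠ 0 := by norm_num
    have : x = -(1/2 : ℂ) := by field_simp; linear_combination h
    rw [this]
    push_cast
    norm_num
  rw [hxq] at hx
  have hinj : Function.Injective (algebraMap ℚ ℂ) := (algebraMap ℚ ℂ).injective
  have hq : IsIntegral ℤ (-(1/2) : ℚ) := (isIntegral_algebraMap_iff hinj).mp hx
  obtain ⟨z, hz⟩ := IsIntegrallyClosed.isIntegral_iff.mp hq
  have : (z : ℚ) = -(1/2) := by exact_mod_cast hz
  have h1 : (2:ℚ) * z = -1 := by rw [this]; ring
  have : (2 * z : ℤ) = -1 := by exact_mod_cast h1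
  omega

lemma isIntegral_aeval {c : ℂ} (hc : IsIntegral ℤ c) (f : Polynomial ℤ) :
    IsIntegral ℤ (aeval c f) := by
  induction f using Polynomial.induction_on with
  | C a => simpa [algebraMap_int_eq] using isIntegral_algebraMap (A := ℂ) (x := a)
  | add p q hp hq => simpa [map_add] using hp.add hq
  | monomial n a ih =>
    have : (aeval c) (C a * X ^ (n + 1)) = (aeval c) (C a * X ^ n) * c := by
      simp [pow_succ, mul_assoc]
    rw [this]
    exact ih.mul hc

/-! ### Derivative facts -/

lemma deriv_P_succ (m : ℕ) :
    derivative (P (m+1)) = 1 + 2 * (P m * derivative (P m)) := by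
  rw [P_succ, derivative_add, derivative_X, derivative_pow, Polynomial.C_eq_natCast]
  norm_num
  ring

lemma P_mul_deriv (m : ℕ) :
    ∃ w : Polynomial ℤ, P m * derivative (P m) = P m + 2 * w := by
  cases m with
  | zero => exact ⟨0, by simp [P_zero]⟩
  | succ m =>
    refine ⟨P (m+1) * (P m * derivative (P m)), ?_⟩
    rw [deriv_P_succ]
    ring

/-- Gleason: the derivative of `P n` does not vanish at algebraic integers that
are roots (in fact at any algebraic integer). -/
lemma deriv_P_ne_zero {c : ℂ} (hc : IsIntegral ℤ c) {n : ℕ} (hn : 1 ≤ n) :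
    aeval c (derivative (P n)) ≠ 0 := by
  obtain ⟨m, rfl⟩ := Nat.exists_eq_add_of_le hn
  rw [show 1 + m = m + 1 by ring, deriv_P_succ]
  intro h
  rw [map_add, map_mul, map_one, map_ofNat] at h
  exact half_lemma (isIntegral_aeval hc _) (by linear_combination h)

/-- Transversality: roots of `S l n` are simple. -/
lemma deriv_SZ_ne_zero {l n : ℕ} (hl : 1 ≤ l) (hn : 1 ≤ n) {c : ℂ}
    (hc : IsIntegral ℤ c) (hroot : aeval c (SZ l n) = 0) :
    aeval c (derivative (SZ l n)) ≠ 0 := by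
  obtain ⟨l', rfl⟩ := Nat.exists_eq_add_of_le hl
  set l := 1 + l' with hldef
  have hln : l + n = (l' + n) + 1 := by omega
  have hl1 : l = l' + 1 := by omega
  obtain ⟨w₁, hw₁⟩ := P_mul_deriv (l' + n)
  obtain ⟨w₂, hw₂⟩ := P_mul_deriv l'
  set A := aeval c (P (l' + n)) with hA
  set B := aeval c (P l') with hB
  -- the root condition
  have hS : A ^ 2 + c + (B ^ 2 + c) = 0 := by
    have := hroot
    rw [SZ, hln, hl1, P_succ, P_succ] at this
    simpa [map_add, map_pow, aeval_X] using this
  intro h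
  rw [SZ, hln, hl1, derivative_add, deriv_P_succ, deriv_P_succ, hw₁, hw₂] at h
  simp only [map_add, map_mul, map_one, map_ofNat] at h
  set W₁ := aeval c w₁ with hW₁
  set W₂ := aeval c w₂ with hW₂
  -- h : 1 + 2 * (A + 2*W₁) + (1 + 2 * (B + 2*W₂)) = 0
  set x := A + B with hx
  have hx2 : x ^ 2 = 2 * (A * B - c) := by rw [hx]; linear_combination hS
  have hkey : 1 + x + 2 * (W₁ + W₂) = 0 := by
    linear_combination h / 2
  -- substitute x = -(1 + 2(W₁+W₂)) into x² = 2y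
  have : 1 + 2 * (2 * (W₁ + W₂) + 2 * (W₁ + W₂)^2 - (A * B - c)) = 0 := by
    linear_combination hx2 - (x - 1 - 2 * (W₁ + W₂)) * hkey
  refine half_lemma ?_ this
  have hAB : IsIntegral ℤ A := isIntegral_aeval hc _
  have hBB : IsIntegral ℤ B := isIntegral_aeval hc _
  have hW₁i : IsIntegral ℤ W₁ := isIntegral_aeval hc _
  have hW₂i : IsIntegral ℤ W₂ := isIntegral_aeval hc _
  have h2 : ∀ y : ℂ, IsIntegral ℤ y → IsIntegral ℤ (2 * y) := fun y hy => by
    rw [two_mul]; exact hy.add hy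
  exact ((h2 _ (hW₁i.add hW₂i)).add (h2 _ ((hW₁i.add hW₂i).pow 2))).sub
    ((hAB.mul hBB).sub hc)


/-! ### chunk 3: the critical orbit -/

noncomputable def A (c : ℂ) (i : ℕ) : ℂ := (pC i).eval c

lemma pC_zero : pC 0 = 0 := by simp [pC, P]
lemma pC_succ (n : ℕ) : pC (n+1) = pC n ^ 2 + X := by
  simp [pC, show P (n+1) = P n ^ 2 + X from rfl, Polynomial.map_add, Polynomial.map_pow]

lemma A_zero (c : ℂ) : A c 0 = 0 := by simp [A, pC_zero]
lemma A_succ (c : ℂ) (i : ℕ) : A c (i+1) = (A c i)^2 + c := by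
  simp [A, pC_succ]

lemma qC_eval (c : ℂ) (l n : ℕ) : (qC l n).eval c = A c (l+n) - A c l := by
  simp [qC, Q, A, pC, Polynomial.map_sub]

lemma A_congr {c : ℂ} {i j : ℕ} (h : i = j) : A c i = A c j := by rw [h]

/-- If the orbit repeats after `d` steps starting at `i`, it is `d`-periodic from `i` on. -/
lemma per_of_eq {c : ℂ} {i d : ℕ} (h : A c (i + d) = A c i) :
    ∀ m, i ≤ m → A c (m + d) = A c m := by
  intro m him
  obtain ⟨s, rfl⟩ := Nat.exists_eq_add_of_le him
  induction s with
  | zero => simpa using h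
  | succ s ih =>
    have h1 : A c (i + (s+1) + d) = (A c (i + s + d))^2 + c := by
      rw [show i + (s+1) + d = (i + s + d) + 1 by omega, A_succ]
    rw [h1, ih (by omega), ← A_succ, A_congr (show i + s + 1 = i + (s+1) by omega)]

lemma per_mult {c : ℂ} {i d : ℕ} (h : A c (i + d) = A c i) :
    ∀ t m, i ≤ m → A c (m + t * d) = A c m := by
  intro t
  induction t with
  | zero => simp
  | succ t ih =>
    intro m him
    have : A c (m + (t+1) * d) = A c ((m + t * d) + d) := A_congr (by ring)
    rw [this, per_of_eq h _ (by omega), ih m him]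

/-- Chaining down: if the orbit is `d`-periodic from `i` and `j + d ≥ i`, then
`A c (j + t*d) = A c (j + d)` for `t ≥ 1`. -/
lemma A_chain {c : ℂ} {i d j : ℕ} (h : A c (i + d) = A c i) (hj : i ≤ j + d) :
    ∀ t, 1 ≤ t → A c (j + t * d) = A c (j + d) := by
  intro t ht
  obtain ⟨s, rfl⟩ := Nat.exists_eq_add_of_le ht
  have : A c (j + (1 + s) * d) = A c ((j + d) + s * d) := A_congr (by ring)
  rw [this, per_mult h s _ hj]

/-- Characterization of zeros of the orbit by the minimal one. -/
lemma A_zero_iff {c : ℂ} {k : ℕ} (hk : 1 ≤ k) (h0 : A c k = 0)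
    (hmin : ∀ j, 1 ≤ j → j < k → A c j ≠ 0) : ∀ m, (A c m = 0 ↔ k ∣ m) := by
  have hglob : A c (0 + k) = A c 0 := by simpa [A_zero] using h0
  intro m
  constructor
  · intro hm
    have h1 : A c (m % k + (m / k) * k) = A c (m % k) := per_mult hglob _ _ (Nat.zero_le _)
    have h2 : A c m = A c (m % k) := by
      rw [← h1]; exact A_congr (by rw [Nat.mod_add_div' m k])
    by_contra hdvd
    have hr1 : 1 ≤ m % k := by
      rcases Nat.eq_zero_or_pos (m % k) with h | h
      · exact absurd (Nat.dvd_of_mod_eq_zero h) hdvd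
      · exact h
    exact hmin _ hr1 (Nat.mod_lt _ (by omega)) (by rw [← h2]; exact hm)
  · rintro ⟨t, rfl⟩
    have := per_mult hglob t 0 (le_refl 0)
    simpa [A_zero, Nat.mul_comm] using this

/-! ### chunk 4: classification of roots -/

lemma mem_hyp_of_min {c : ℂ} {k : ℕ} (hk : 1 ≤ k) (h0 : A c k = 0)
    (hmin : ∀ j, 1 ≤ j → j < k → A c j ≠ 0) : c ∈ hyp k := by
  refine ⟨h0, ?_⟩
  intro k' hdvd hne
  have hk'1 : 1 ≤ k' := Nat.pos_of_ne_zero fun h => by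
    subst h; exact absurd (zero_dvd_iff.mp hdvd) (by omega)
  have := hmin k' hk'1 (lt_of_le_of_ne (Nat.le_of_dvd (by omega) hdvd) hne)
  simpa [A] using this

lemma hyp_min {c : ℂ} {k : ℕ} (hk : 1 ≤ k) (hc : c ∈ hyp k) :
    A c k = 0 ∧ ∀ j, 1 ≤ j → j < k → A c j ≠ 0 := by
  obtain ⟨h0, hstrict⟩ := hc
  refine ⟨h0, ?_⟩
  intro j hj1 hjk hAj
  have hex : ∃ m, 1 ≤ m ∧ A c m = 0 := ⟨j, hj1, hAj⟩
  obtain ⟨hk₀1, hk₀0⟩ := Nat.find_spec hex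
  have hmin : ∀ i, 1 ≤ i → i < Nat.find hex → A c i ≠ 0 :=
    fun i h1 h2 h3 => Nat.find_min hex h2 ⟨h1, h3⟩
  have hdvd : Nat.find hex ∣ k := (A_zero_iff hk₀1 hk₀0 hmin k).mp h0
  have hle : Nat.find hex ≤ j := Nat.find_min' hex ⟨hj1, hAj⟩
  exact hstrict _ hdvd (by omega) hk₀0

lemma hyp_unique {k k' : ℕ} (hk : 1 ≤ k) (hk' : 1 ≤ k') {c : ℂ}
    (h1 : c ∈ hyp k) (h2 : c ∈ hyp k') : k = k' := by
  obtain ⟨h10, h1m⟩ := hyp_min hk h1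
  obtain ⟨h20, h2m⟩ := hyp_min hk' h2
  exact Nat.dvd_antisymm ((A_zero_iff hk h10 h1m k').mp h20)
    ((A_zero_iff hk' h20 h2m k).mp h10)

lemma tail_min_dvd {c : ℂ} {i : ℕ} (hex : ∃ d, 1 ≤ d ∧ A c (i + d) = A c i) :
    ∀ n, 1 ≤ n → A c (i + n) = A c i → Nat.find hex ∣ n := by
  intro n hn htail
  obtain ⟨hk1, hkper⟩ := Nat.find_spec hex
  set k := Nat.find hex with hkdef
  have hmod : A c (i + n % k) = A c i := by
    have h1 : A c ((i + n % k) + (n / k) * k) = A c (i + n % k) :=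
      per_mult hkper _ _ (by omega)
    have h2 : (i + n % k) + (n / k) * k = i + n := by
      have := Nat.mod_add_div' n k
      omega
    rw [← htail, ← h2, h1]
  by_contra hdvd
  have hr1 : 1 ≤ n % k := by
    rcases Nat.eq_zero_or_pos (n % k) with h | h
    · exact absurd (Nat.dvd_of_mod_eq_zero h) hdvd
    · exact h
  exact Nat.find_min hex (Nat.mod_lt _ (by omega)) ⟨hr1, hmod⟩

lemma mis_dvd_of_tail {c : ℂ} {l k : ℕ} (hk : 1 ≤ k) (hc : c ∈ mis (l+1) k) :
    ∀ j, 1 ≤ j → A c ((l+1) + j) = A c (l+1) → k ∣ j := by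
  obtain ⟨h1, _h2, h3⟩ := hc
  have htail : A c ((l+1) + k) = A c (l+1) := by
    have := qC_eval c (l+1) k
    rw [h1] at this
    exact sub_eq_zero.mp this.symm
  intro j hj hjtail
  have hex : ∃ d, 1 ≤ d ∧ A c ((l+1) + d) = A c (l+1) := ⟨k, hk, htail⟩
  have hk₀k : Nat.find hex ∣ k := tail_min_dvd hex k hk htail
  have hk₀j : Nat.find hex ∣ j := tail_min_dvd hex j hj hjtail
  obtain ⟨hk₀1, hk₀per⟩ := Nat.find_spec hex
  have hkk₀ : k = Nat.find hex := by
    by_contra hne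
    exact h3 _ hk₀k (fun h => hne h.symm)
      (by rw [qC_eval]; exact sub_eq_zero.mpr hk₀per)
  rw [hkk₀]; exact hk₀j

lemma mis_unique {c : ℂ} {l k k' : ℕ} (hk : 1 ≤ k) (hk' : 1 ≤ k')
    (h1 : c ∈ mis (l+1) k) (h2 : c ∈ mis (l+1) k') : k = k' := by
  have t1 : A c ((l+1) + k) = A c (l+1) := by
    have := qC_eval c (l+1) k
    rw [h1.1] at this
    exact sub_eq_zero.mp this.symm
  have t2 : A c ((l+1) + k') = A c (l+1) := by
    have := qC_eval c (l+1) k'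
    rw [h2.1] at this
    exact sub_eq_zero.mp this.symm
  exact Nat.dvd_antisymm (mis_dvd_of_tail hk h1 k' hk' t2)
    (mis_dvd_of_tail hk' h2 k hk t1)

lemma hyp_mis_disjoint {c : ℂ} {l k k' : ℕ} (hk : 1 ≤ k) (hk' : 1 ≤ k')
    (h1 : c ∈ hyp k) (h2 : c ∈ mis (l+1) k') : False := by
  obtain ⟨h10, _⟩ := hyp_min hk h1
  have hglob : A c (0 + k) = A c 0 := by simpa [A_zero] using h10
  have htail : A c ((l+1) + k') = A c (l+1) := by
    have := qC_eval c (l+1) k'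
    rw [h2.1] at this
    exact sub_eq_zero.mp this.symm
  have key : A c (l + k') = A c l := by
    have e1 : A c ((l + k') + k) = A c (l + k') := per_of_eq hglob _ (Nat.zero_le _)
    have e2 : A c ((l + k) + k') = A c (l + k) := per_of_eq htail _ (by omega)
    have e3 : A c (l + k) = A c l := per_of_eq hglob _ (Nat.zero_le _)
    rw [← e1, A_congr (show (l + k') + k = (l + k) + k' by ring), e2, e3]
  exact h2.2.1 (by simpa [qC_eval] using sub_eq_zero.mpr key)

lemma S_root_hyp {c : ℂ} {l n : ℕ} (hl : 1 ≤ l) (_hn : 1 ≤ n)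
    (hS : A c (l + n) = - A c l) (hAl : A c l = 0) :
    ∃ k, k ∣ n ∧ k ∣ l ∧ 1 ≤ k ∧ c ∈ hyp k := by
  have hex : ∃ m, 1 ≤ m ∧ A c m = 0 := ⟨l, hl, hAl⟩
  obtain ⟨hk1, hk0⟩ := Nat.find_spec hex
  have hmin : ∀ i, 1 ≤ i → i < Nat.find hex → A c i ≠ 0 :=
    fun i h1 h2 h3 => Nat.find_min hex h2 ⟨h1, h3⟩
  have hiff := A_zero_iff hk1 hk0 hmin
  have hdl : Nat.find hex ∣ l := (hiff l).mp hAl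
  have hdln : Nat.find hex ∣ l + n := (hiff (l+n)).mp (by rw [hS, hAl]; ring)
  exact ⟨Nat.find hex, (Nat.dvd_add_right hdl).mp hdln, hdl, hk1,
    mem_hyp_of_min hk1 hk0 hmin⟩

lemma S_root_mis {c : ℂ} {l n : ℕ} (hl : 1 ≤ l) (hn : 1 ≤ n)
    (hS : A c (l + n) = - A c l) (hAl : A c l ≠ 0) :
    ∃ k, k ∣ n ∧ 1 ≤ k ∧ c ∈ mis (l+1) k := by
  have htail : A c ((l+1) + n) = A c (l+1) := by
    have h1 : A c ((l+1) + n) = (A c (l+n))^2 + c := by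
      rw [A_congr (show (l+1) + n = (l+n) + 1 by omega), A_succ]
    rw [h1, hS, A_succ]; ring
  have hex : ∃ d, 1 ≤ d ∧ A c ((l+1) + d) = A c (l+1) := ⟨n, hn, htail⟩
  obtain ⟨hk1, hkper⟩ := Nat.find_spec hex
  set k := Nat.find hex with hkdef
  have hdvd : k ∣ n := tail_min_dvd hex n hn htail
  have hchain : A c (l + n) = A c (l + k) := by
    have h1 : A c (l + (n / k) * k) = A c (l + k) :=
      A_chain hkper (by omega) _
        ((Nat.one_le_div_iff (by omega)).mpr (Nat.le_of_dvd (by omega) hdvd))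
    rw [← h1]
    exact A_congr (by rw [Nat.div_mul_cancel hdvd])
  refine ⟨k, hdvd, hk1, ?_, ?_, ?_⟩
  · rw [qC_eval]; exact sub_eq_zero.mpr hkper
  · rw [show (l + 1 - 1) = l from rfl, qC_eval, ← hchain, hS]
    intro h
    apply hAl
    have h2 : (2:ℂ) * A c l = 0 := by linear_combination -h
    simpa using h2
  · intro k' hk'd hk'ne
    have hk'1 : 1 ≤ k' := Nat.pos_of_ne_zero fun h => by
      subst h; exact absurd (zero_dvd_iff.mp hk'd) (by omega)
    have hk'lt : k' < k := lt_of_le_of_ne (Nat.le_of_dvd (by omega) hk'd) hk'ne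
    rw [qC_eval]
    intro h
    exact Nat.find_min hex hk'lt ⟨hk'1, sub_eq_zero.mp h⟩

lemma hyp_S_root {c : ℂ} {l n k : ℕ} (hk : 1 ≤ k) (hkl : k ∣ l) (hkn : k ∣ n)
    (hc : c ∈ hyp k) : A c (l + n) = - A c l := by
  obtain ⟨h0, hm⟩ := hyp_min hk hc
  have hiff := A_zero_iff hk h0 hm
  rw [(hiff l).mpr hkl, (hiff (l+n)).mpr (Nat.dvd_add hkl hkn)]
  ring

lemma mis_S_root {c : ℂ} {l n k : ℕ} (_hl : 1 ≤ l) (hn : 1 ≤ n) (hk : 1 ≤ k)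
    (hkn : k ∣ n) (hc : c ∈ mis (l+1) k) : A c (l + n) = - A c l := by
  have htail : A c ((l+1) + k) = A c (l+1) := by
    have := qC_eval c (l+1) k
    rw [hc.1] at this
    exact sub_eq_zero.mp this.symm
  have htn : A c ((l+1) + n) = A c (l+1) := by
    have h1 : A c ((l+1) + (n / k) * k) = A c (l+1) := per_mult htail _ _ (le_refl _)
    rw [← h1]; exact A_congr (by rw [Nat.div_mul_cancel hkn])
  have hsq : (A c (l+n))^2 = (A c l)^2 := by
    have h1 : A c ((l+1) + n) = (A c (l+n))^2 + c := by
      rw [A_congr (show (l+1) + n = (l+n) + 1 by omega), A_succ]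
    have h2 : A c (l+1) = (A c l)^2 + c := A_succ c l
    rw [h1, h2] at htn
    linear_combination htn
  have hcases : A c (l+n) = A c l ∨ A c (l+n) = - A c l := by
    rcases mul_eq_zero.mp (show (A c (l+n) - A c l) * (A c (l+n) + A c l) = 0 by
      linear_combination hsq) with h | h
    · exact Or.inl (sub_eq_zero.mp h)
    · exact Or.inr (by linear_combination h)
  rcases hcases with h | h
  · exfalso
    have hchain : A c (l + n) = A c (l + k) := by
      have h1 : A c (l + (n / k) * k) = A c (l + k) :=
        A_chain htail (by omega) _
          ((Nat.one_le_div_iff (by omega)).mpr (Nat.le_of_dvd (by omega) hkn))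
      rw [← h1]
      exact A_congr (by rw [Nat.div_mul_cancel hkn])
    apply hc.2.1
    rw [show (l + 1 - 1) = l from rfl, qC_eval]
    rw [← hchain, h]
    ring
  · exact h

lemma pC_root_hyp {c : ℂ} {n : ℕ} (hn : 1 ≤ n) (h : A c n = 0) :
    ∃ k, k ∣ n ∧ 1 ≤ k ∧ c ∈ hyp k := by
  have hex : ∃ m, 1 ≤ m ∧ A c m = 0 := ⟨n, hn, h⟩
  obtain ⟨hk1, hk0⟩ := Nat.find_spec hex
  have hmin : ∀ i, 1 ≤ i → i < Nat.find hex → A c i ≠ 0 :=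
    fun i h1 h2 h3 => Nat.find_min hex h2 ⟨h1, h3⟩
  exact ⟨Nat.find hex, (A_zero_iff hk1 hk0 hmin n).mp h, hk1,
    mem_hyp_of_min hk1 hk0 hmin⟩

lemma hyp_pC_root {c : ℂ} {n k : ℕ} (hk : 1 ≤ k) (hkn : k ∣ n) (hc : c ∈ hyp k) :
    A c n = 0 := by
  obtain ⟨h0, hm⟩ := hyp_min hk hc
  exact (A_zero_iff hk h0 hm n).mpr hkn


/-- monic: monic with simple roots => product of linear factors over root finset -/
lemma eq_prod_of_monic_of_simple (f : Polynomial ℂ) (hm : f.Monic)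
    (hsep : ∀ c, f.eval c = 0 → f.derivative.eval c ≠ 0) :
    f = ∏ c ∈ f.roots.toFinset, (X - C c) := by
  classical
  have hsplit : Splits f := IsAlgClosed.splits f
  have h1 : f = (f.roots.map fun a => X - C a).prod :=
    hsplit.eq_prod_roots_of_monic hm
  have hnodup : f.roots.Nodup := by
    rw [Multiset.nodup_iff_count_le_one]
    intro c
    by_cases hc : c ∈ f.roots
    · rw [count_roots]
      by_contra hgt
      push_neg at hgt
      have h2 : (X - C c)^2 ∣ f :=
        (pow_dvd_pow _ hgt).trans (pow_rootMultiplicity_dvd f c)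
      obtain ⟨g, hg⟩ := h2
      have hr : f.eval c = 0 := (mem_roots (hm.ne_zero)).mp hc
      apply hsep c hr
      rw [hg]
      simp [derivative_mul, derivative_pow]
    · simp [Multiset.count_eq_zero_of_notMem hc]
  conv_lhs => rw [h1]
  rw [Finset.prod_multiset_map_count]
  exact Finset.prod_congr rfl fun c hc => by
    rw [Multiset.count_eq_one_of_mem hnodup (Multiset.mem_toFinset.mp hc), pow_one]


/-! ### chunk 6: monicity over ℂ, finiteness, Finset versions -/

noncomputable def SC (l n : ℕ) : Polynomial ℂ := (SZ l n).map (Int.castRingHom ℂ)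

lemma eval_mapInt (g : Polynomial ℤ) (c : ℂ) :
    eval c (g.map (Int.castRingHom ℂ)) = aeval c g := by
  rw [eval_map, aeval_def, algebraMap_int_eq]

lemma SC_eval (c : ℂ) (l n : ℕ) : (SC l n).eval c = A c (l+n) + A c l := by
  simp [SC, SZ, A, pC, Polynomial.map_add]

lemma pC_monic {n : ℕ} (hn : 1 ≤ n) : (pC n).Monic := (P_monic hn).map _

lemma pC_ne_zero {n : ℕ} (hn : 1 ≤ n) : pC n ≠ 0 := (pC_monic hn).ne_zero

lemma P_degree_lt {l n : ℕ} (hl : 1 ≤ l) (hn : 1 ≤ n) :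
    (P l).degree < (P (l+n)).degree := by
  rw [degree_eq_natDegree (P_monic hl).ne_zero,
    degree_eq_natDegree (P_monic (by omega : 1 ≤ l + n)).ne_zero, P_natDeg hl,
    P_natDeg (by omega : 1 ≤ l + n)]
  exact_mod_cast Nat.pow_lt_pow_right (by norm_num) (by omega)

lemma Q_monic {l n : ℕ} (hn : 1 ≤ n) : (Q l n).Monic := by
  cases l with
  | zero =>
    have : Q 0 n = P n := by simp [Q, P_zero]
    rw [this]; exact P_monic hn
  | succ l =>
    have h1 : (P (l+1+n)).Monic := P_monic (by omega)
    have : Q (l+1) n = P (l+1+n) + (- P (l+1)) := by rw [Q]; ring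
    rw [this]
    exact h1.add_of_left (by rw [degree_neg]; exact P_degree_lt (by omega) hn)

lemma qC_monic {l n : ℕ} (hn : 1 ≤ n) : (qC l n).Monic := (Q_monic hn).map _

lemma qC_ne_zero {l n : ℕ} (hn : 1 ≤ n) : qC l n ≠ 0 := (qC_monic hn).ne_zero

lemma SC_monic {l n : ℕ} (hl : 1 ≤ l) (hn : 1 ≤ n) : (SC l n).Monic :=
  (SZ_monic hl hn).map _

lemma isIntegral_of_root {c : ℂ} {f : Polynomial ℤ} (hf : f.Monic)
    (h : eval c (f.map (Int.castRingHom ℂ)) = 0) : IsIntegral ℤ c :=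
  ⟨f, hf, by rwa [eval_mapInt] at h⟩

/-- pC n has simple roots. -/
lemma pC_simple {n : ℕ} (hn : 1 ≤ n) :
    ∀ c, (pC n).eval c = 0 → (pC n).derivative.eval c ≠ 0 := by
  intro c hc
  have hci : IsIntegral ℤ c := isIntegral_of_root (P_monic hn) hc
  rw [pC, derivative_map, eval_mapInt]
  exact deriv_P_ne_zero hci hn

/-- SC has simple roots. -/
lemma SC_simple {l n : ℕ} (hl : 1 ≤ l) (hn : 1 ≤ n) :
    ∀ c, (SC l n).eval c = 0 → (SC l n).derivative.eval c ≠ 0 := by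
  intro c hc
  have hci : IsIntegral ℤ c := isIntegral_of_root (SZ_monic hl hn) hc
  rw [SC, derivative_map, eval_mapInt]
  rw [SC] at hc
  exact deriv_SZ_ne_zero hl hn hci (by rwa [eval_mapInt] at hc)

lemma hyp_finite {k : ℕ} (hk : 1 ≤ k) : (hyp k).Finite :=
  Set.Finite.subset (finite_setOf_isRoot (pC_ne_zero hk)) fun c hc => hc.1

lemma mis_finite (l : ℕ) {k : ℕ} (hk : 1 ≤ k) : (mis l k).Finite :=
  Set.Finite.subset (finite_setOf_isRoot (qC_ne_zero hk)) fun c hc => hc.1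

noncomputable def hypF (k : ℕ) : Finset ℂ :=
  if h : 1 ≤ k then (hyp_finite h).toFinset else ∅

noncomputable def misF (l k : ℕ) : Finset ℂ :=
  if h : 1 ≤ k then (mis_finite l h).toFinset else ∅

lemma mem_hypF {c : ℂ} {k : ℕ} (hk : 1 ≤ k) : c ∈ hypF k ↔ c ∈ hyp k := by
  rw [hypF, dif_pos hk, Set.Finite.mem_toFinset]

lemma mem_misF {c : ℂ} {l k : ℕ} (hk : 1 ≤ k) : c ∈ misF l k ↔ c ∈ mis l k := by
  rw [misF, dif_pos hk, Set.Finite.mem_toFinset]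

lemma hPoly_eq {k : ℕ} (hk : 1 ≤ k) : hPoly k = ∏ c ∈ hypF k, (X - C c) := by
  rw [hPoly, hypF, dif_pos hk]
  exact finprod_mem_eq_finite_toFinset_prod _ _

lemma mPoly_eq {l k : ℕ} (hk : 1 ≤ k) : mPoly l k = ∏ c ∈ misF l k, (X - C c) := by
  rw [mPoly, misF, dif_pos hk]
  exact finprod_mem_eq_finite_toFinset_prod _ _


/-! ### chunk 7: the two factorizations -/

lemma pC_factor {n : ℕ} (hn : 1 ≤ n) : pC n = ∏ k ∈ n.divisors, hPoly k := by
  classical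
  have h1 : pC n = ∏ c ∈ (pC n).roots.toFinset, (X - C c) :=
    eq_prod_of_monic_of_simple _ (pC_monic hn) (pC_simple hn)
  have hset : (pC n).roots.toFinset = n.divisors.biUnion hypF := by
    ext c
    simp only [Multiset.mem_toFinset, mem_roots (pC_ne_zero hn), Finset.mem_biUnion,
      Nat.mem_divisors]
    constructor
    · intro hc
      obtain ⟨k, hkdvd, hk1, hck⟩ := pC_root_hyp hn hc
      exact ⟨k, ⟨hkdvd, by omega⟩, (mem_hypF hk1).mpr hck⟩
    · rintro ⟨k, ⟨hkdvd, -⟩, hck⟩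
      have hk1 : 1 ≤ k := Nat.pos_of_dvd_of_pos hkdvd (by omega)
      exact hyp_pC_root hk1 hkdvd ((mem_hypF hk1).mp hck)
  have hdisj : (↑n.divisors : Set ℕ).PairwiseDisjoint hypF := by
    intro k hk k' hk' hne
    simp only [Finset.mem_coe, Nat.mem_divisors] at hk hk'
    have hk1 : 1 ≤ k := Nat.pos_of_dvd_of_pos hk.1 (by omega)
    have hk'1 : 1 ≤ k' := Nat.pos_of_dvd_of_pos hk'.1 (by omega)
    show Disjoint _ _
    rw [Finset.disjoint_left]
    intro c hc hc'
    exact hne (hyp_unique hk1 hk'1 ((mem_hypF hk1).mp hc) ((mem_hypF hk'1).mp hc'))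
  rw [h1, hset, Finset.prod_biUnion hdisj]
  refine Finset.prod_congr rfl fun k hk => ?_
  have hk1 : 1 ≤ k := Nat.pos_of_dvd_of_pos (Nat.mem_divisors.mp hk).1 (by omega)
  exact (hPoly_eq hk1).symm

lemma SC_factor {l n : ℕ} (hl : 1 ≤ l) (hn : 1 ≤ n) :
    SC l n = ∏ k ∈ n.divisors, ((if k ∣ l then hPoly k else 1) * mPoly (l+1) k) := by
  classical
  have h1 : SC l n = ∏ c ∈ (SC l n).roots.toFinset, (X - C c) :=
    eq_prod_of_monic_of_simple _ (SC_monic hl hn) (SC_simple hl hn)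
  set TF : ℕ → Finset ℂ := fun k => (if k ∣ l then hypF k else ∅) ∪ misF (l+1) k with hTF
  have hmemT : ∀ k, 1 ≤ k → ∀ c, (c ∈ TF k ↔ ((k ∣ l ∧ c ∈ hyp k) ∨ c ∈ mis (l+1) k)) := by
    intro k hk c
    simp only [hTF, Finset.mem_union]
    constructor
    · rintro (h | h)
      · by_cases hd : k ∣ l
        · rw [if_pos hd] at h; exact Or.inl ⟨hd, (mem_hypF hk).mp h⟩
        · rw [if_neg hd] at h; simp at h
      · exact Or.inr ((mem_misF hk).mp h)
    · rintro (⟨hd, h⟩ | h)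
      · exact Or.inl (by rw [if_pos hd]; exact (mem_hypF hk).mpr h)
      · exact Or.inr ((mem_misF hk).mpr h)
  have hset : (SC l n).roots.toFinset = n.divisors.biUnion TF := by
    ext c
    simp only [Multiset.mem_toFinset, mem_roots (SC_monic hl hn).ne_zero, Finset.mem_biUnion,
      Nat.mem_divisors]
    constructor
    · intro hc
      have hS : A c (l+n) = - A c l := by
        have h2 := SC_eval c l n
        rw [show (SC l n).eval c = 0 from hc] at h2
        linear_combination -h2
      by_cases hAl : A c l = 0
      · obtain ⟨k, hkn, hkl, hk1, hck⟩ := S_root_hyp hl hn hS hAl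
        exact ⟨k, ⟨hkn, by omega⟩, (hmemT k hk1 c).mpr (Or.inl ⟨hkl, hck⟩)⟩
      · obtain ⟨k, hkn, hk1, hck⟩ := S_root_mis hl hn hS hAl
        exact ⟨k, ⟨hkn, by omega⟩, (hmemT k hk1 c).mpr (Or.inr hck)⟩
    · rintro ⟨k, ⟨hkn, -⟩, hck⟩
      have hk1 : 1 ≤ k := Nat.pos_of_dvd_of_pos hkn (by omega)
      have hS : A c (l+n) = - A c l := by
        rcases (hmemT k hk1 c).mp hck with ⟨hkl, hch⟩ | hcm
        · exact hyp_S_root hk1 hkl hkn hch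
        · exact mis_S_root hl hn hk1 hkn hcm
      show eval c (SC l n) = 0
      rw [SC_eval, hS]; ring
  have hdisjT : (↑n.divisors : Set ℕ).PairwiseDisjoint TF := by
    intro k hk k' hk' hne
    simp only [Finset.mem_coe, Nat.mem_divisors] at hk hk'
    have hk1 : 1 ≤ k := Nat.pos_of_dvd_of_pos hk.1 (by omega)
    have hk'1 : 1 ≤ k' := Nat.pos_of_dvd_of_pos hk'.1 (by omega)
    show Disjoint _ _
    rw [Finset.disjoint_left]
    intro c hc hc'
    rcases (hmemT k hk1 c).mp hc with ⟨_, hc1⟩ | hc1 <;>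
      rcases (hmemT k' hk'1 c).mp hc' with ⟨_, hc2⟩ | hc2
    · exact hne (hyp_unique hk1 hk'1 hc1 hc2)
    · exact hyp_mis_disjoint hk1 hk'1 hc1 hc2
    · exact hyp_mis_disjoint hk'1 hk1 hc2 hc1
    · exact hne (mis_unique hk1 hk'1 hc1 hc2)
  rw [h1, hset, Finset.prod_biUnion hdisjT]
  refine Finset.prod_congr rfl fun k hk => ?_
  have hk1 : 1 ≤ k := Nat.pos_of_dvd_of_pos (Nat.mem_divisors.mp hk).1 (by omega)
  have hdisj2 : Disjoint (if k ∣ l then hypF k else ∅) (misF (l+1) k) := by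
    rw [Finset.disjoint_left]
    intro c hc hc'
    by_cases hd : k ∣ l
    · rw [if_pos hd] at hc
      exact hyp_mis_disjoint hk1 hk1 ((mem_hypF hk1).mp hc) ((mem_misF hk1).mp hc')
    · rw [if_neg hd] at hc; simp at hc
  show ∏ c ∈ (if k ∣ l then hypF k else ∅) ∪ misF (l+1) k, (X - C c) = _
  rw [Finset.prod_union hdisj2, mPoly_eq hk1]
  congr 1
  by_cases hd : k ∣ l
  · rw [if_pos hd, if_pos hd, hPoly_eq hk1]
  · rw [if_neg hd, if_neg hd]; simp


/-- Complete factorization of the Misiurewicz–Thurston polynomial `q l n` over `ℂ`. -/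
theorem q_factorization (l n : ℕ) (hn : 1 ≤ n) :
    qC l n = ∏ k ∈ n.divisors, (hPoly k ^ eta l k * ∏ j ∈ Finset.Icc 2 l, mPoly j k) := by
  induction l with
  | zero =>
    have h0 : qC 0 n = pC n := by simp [qC, Q, P_zero, pC]
    rw [h0, pC_factor hn]
    refine Finset.prod_congr rfl fun k hk => ?_
    simp [_root_.eta]
  | succ l ih =>
    have hqs : qC (l+1) n = qC l n * SC l n := by
      rw [qC, Q_succ, Polynomial.map_mul]; rfl
    rcases Nat.eq_zero_or_pos l with rfl | hl
    · have hS0 : SC 0 n = pC n := by simp [SC, SZ, P_zero, pC]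
      have hq0 : qC 0 n = pC n := by simp [qC, Q, P_zero, pC]
      rw [hqs, hS0, hq0, pC_factor hn, ← Finset.prod_mul_distrib]
      refine Finset.prod_congr rfl fun k hk => ?_
      have h1 : _root_.eta 1 k = 2 := by simp [_root_.eta]
      have h0 : Finset.Icc 2 1 = (∅ : Finset ℕ) := rfl
      rw [h1, h0]
      simp [sq]
    · rw [hqs, ih, SC_factor hl hn, ← Finset.prod_mul_distrib]
      refine Finset.prod_congr rfl fun k hk => ?_
      have heta : _root_.eta (l+1) k = _root_.eta l k + (if k ∣ l then 1 else 0) := by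
        rw [_root_.eta, _root_.eta, if_neg (show ¬ l + 1 = 0 by omega), if_neg (show ¬ l = 0 by omega)]
        have hsd := Nat.succ_div (a := l-1) (b := k)
        rw [show l - 1 + 1 = l by omega] at hsd
        simp only [Nat.add_sub_cancel]
        by_cases hd : k ∣ l
        · rw [if_pos hd]; rw [if_pos hd] at hsd; omega
        · rw [if_neg hd]; rw [if_neg hd] at hsd; omega
      have hIcc : ∏ j ∈ Finset.Icc 2 (l+1), mPoly j k
          = (∏ j ∈ Finset.Icc 2 l, mPoly j k) * mPoly (l+1) k :=
        Finset.prod_Icc_succ_top (by omega : 2 ≤ l+1) _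
      rw [heta, pow_add, hIcc]
      by_cases hd : k ∣ l
      · rw [if_pos hd, if_pos hd]; ring
      · rw [if_neg hd, if_neg hd]; ring
end

section
/- Let p_n ∈ ℤ[z] be defined by p_0 = 0 and p_{n+1} = p_n^2 + z. For all positive integers k and n with k | n, the polynomial p_k divides p_n in ℤ[z]. -/
open Polynomial

lemma P_key (a b : ℕ) : P a ∣ P (a + b) - P b := by
  induction b with
  | zero => simp [P]
  | succ b ih =>
      have h : P (a + (b + 1)) - P (b + 1) = (P (a + b) - P b) * (P (a + b) + P b) := by
        show P (a + b + 1) - P (b + 1) = _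
        simp only [P]
        ring
      rw [h]
      exact ih.mul_right _

/-- If `k ∣ n` for positive integers `k` and `n`, then `p k` divides `p n` in `ℤ[z]`. -/
theorem p_dvd_p (k n : ℕ) (hk : 1 ≤ k) (hn : 1 ≤ n) (hdvd : k ∣ n) :
    P k ∣ P n := by
  obtain ⟨m, rfl⟩ := hdvd
  have hm : 1 ≤ m := Nat.pos_of_ne_zero (by rintro rfl; simp at hn)
  clear hn
  induction m with
  | zero => simp at hm
  | succ m ih =>
      rcases Nat.eq_zero_or_pos m with rfl | hm'
      · simpa using dvd_refl (P k)
      · have h1 := ih hm'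
        have h2 := P_key (k * m) k
        have : P (k * (m + 1)) = (P (k * m + k) - P k) + P k := by ring_nf
        rw [this]
        exact dvd_add (dvd_trans h1 h2) dvd_rfl
end

section
/- Let p_n ∈ ℤ[z] be defined by p_0 = 0 and p_{n+1} = p_n^2 + z, and for ℓ, n ∈ ℕ set q_{ℓ,n} = p_{ℓ+n} − p_ℓ. For every ℓ ∈ ℕ and all positive integers k and n with k | n, the polynomial q_{ℓ,k} divides q_{ℓ,n} in ℤ[z]. -/
open Polynomial

lemma P_sub_dvd_shift (a b j : ℕ) : (P a - P b) ∣ (P (a + j) - P (b + j)) := by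
  induction j with
  | zero => simp
  | succ j ih =>
    have : P (a + (j+1)) - P (b + (j+1)) =
        (P (a+j) - P (b+j)) * (P (a+j) + P (b+j)) := by
      show P (a+j+1) - P (b+j+1) = _
      simp [P]
      ring
    rw [this]
    exact ih.mul_right _

lemma Q_dvd_mul (l k : ℕ) (t : ℕ) (ht : 1 ≤ t) : Q l k ∣ Q l (k * t) := by
  induction t with
  | zero => omega
  | succ t ih =>
    rcases Nat.eq_or_lt_of_le ht with h | h
    · simp [← h]
    · have ht' : 1 ≤ t := by omega
      have h1 : Q l k ∣ P (l + k * t + k) - P (l + k) := by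
        have := P_sub_dvd_shift (l + k * t) l k
        have hQ : Q l (k * t) = P (l + k * t) - P l := rfl
        calc Q l k ∣ Q l (k * t) := ih ht'
          _ ∣ P (l + k * t + k) - P (l + k) := by rw [hQ] at *; exact this
      have h2 : Q l (k * (t+1)) = (P (l + k * t + k) - P (l + k)) + Q l k := by
        have : l + k * (t+1) = l + k * t + k := by ring
        simp only [Q, this]
        ring
      rw [h2]
      exact dvd_add h1 (dvd_refl _)

/-- If `k ∣ n` for positive integers `k` and `n`, then `q l k` divides `q l n` in `ℤ[z]`. -/
theorem q_dvd_q_of_dvd (l k n : ℕ) (hk : 1 ≤ k) (hn : 1 ≤ n) (hdvd : k ∣ n) :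
    Q l k ∣ Q l n := by
  obtain ⟨t, rfl⟩ := hdvd
  exact Q_dvd_mul l k t (by
    rcases Nat.eq_zero_or_pos t with h | h
    · simp [h] at hn
    · exact h)
end

section
/- Let p_n ∈ ℤ[z] be defined by p_0 = 0 and p_{n+1} = p_n^2 + z, and for ℓ, n ∈ ℕ set q_{ℓ,n} = p_{ℓ+n} − p_ℓ. For every n ≥ 1 and all ℓ', ℓ ∈ ℕ with ℓ' ≤ ℓ, the polynomial q_{ℓ',n} divides q_{ℓ,n} in ℤ[z]. -/
open Polynomial

lemma Q_step (l n : ℕ) : Q (l+1) n = Q l n * (P (l+n) + P l) := by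
  have h : l + 1 + n = (l + n) + 1 := by ring
  rw [Q, Q, h, P, P]
  ring

/-- For `l' ≤ l`, the polynomial `q l' n` divides `q l n` in `ℤ[z]`. -/
theorem q_dvd_q_of_le (n : ℕ) (hn : 1 ≤ n) (l' l : ℕ) (hl : l' ≤ l) :
    Q l' n ∣ Q l n := by
  induction l with
  | zero => rw [Nat.le_zero.mp hl]
  | succ l ih =>
    rcases Nat.le_succ_iff.mp hl with h | h
    · exact (ih h).trans ⟨P (l+n) + P l, Q_step l n⟩
    · rw [h]
end

section
/- Let p_n ∈ ℤ[z] be defined by p_0 = 0 and p_{n+1} = p_n^2 + z. For all n, k ∈ ℕ, one has p_n ≡ p_{n+k} (mod z^{n+1}), i.e. z^{n+1} divides p_{n+k} − p_n in ℤ[z] (the trailing coefficients of p_n stabilize as n grows). -/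
open Polynomial

lemma X_dvd_P (n : ℕ) : (X : Polynomial ℤ) ∣ P n := by
  induction n with
  | zero => simp [P]
  | succ n ih =>
    rw [P]
    exact dvd_add (dvd_pow ih two_ne_zero) dvd_rfl

/-- The trailing coefficients of `p n` stabilize: `p n ≡ p (n + k)  [mod z^(n+1)]`. -/
theorem p_trailing_stable (n k : ℕ) :
    X ^ (n + 1) ∣ P (n + k) - P n := by
  induction n generalizing k with
  | zero =>
    simpa [P] using X_dvd_P k
  | succ n ih =>
    have h1 : P (n + 1 + k) - P (n + 1) = (P (n + k) - P n) * (P (n + k) + P n) := by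
      have : n + 1 + k = (n + k) + 1 := by ring
      rw [this, P, P]
      ring
    rw [h1, pow_succ]
    exact mul_dvd_mul (ih k) (dvd_add (X_dvd_P _) (X_dvd_P _))
end

section
/- Let p_n ∈ ℤ[z] be defined by p_0 = 0 and p_{n+1} = p_n^2 + z, and for ℓ, n ∈ ℕ set q_{ℓ,n} = p_{ℓ+n} − p_ℓ. For every ℓ ≥ 1 and n ≥ 1, one has q_{ℓ,n} ≡ 2^{ℓ−1} z^{ℓ+1} (mod z^{ℓ+2}) in ℤ[z]. Consequently, 0 is a root of q_{ℓ,n} of multiplicity exactly ℓ + 1. -/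
open Polynomial

lemma X_dvd_P_s13 : ∀ l, X ∣ P l
  | 0 => by simp [P]
  | l + 1 => by
    obtain ⟨c, hc⟩ := X_dvd_P_s13 l
    exact ⟨c * c * X + 1, by simp [P, hc]; ring⟩

lemma P_sub_X (l : ℕ) (hl : 1 ≤ l) : X ^ 2 ∣ P l - X := by
  obtain ⟨m, rfl⟩ := Nat.exists_eq_add_of_le hl
  obtain ⟨c, hc⟩ := X_dvd_P_s13 m
  refine ⟨c ^ 2, ?_⟩
  have h : P (1 + m) = P m ^ 2 + X := by rw [Nat.add_comm]; rfl
  rw [h, hc]; ring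

lemma base_aux : ∀ n, 1 ≤ n → X ^ 3 ∣ P (n + 1) - X - X ^ 2 := by
  intro n hn
  induction n with
  | zero => omega
  | succ n ih =>
    rcases Nat.eq_or_lt_of_le hn with h | h
    · have : n = 0 := by omega
      subst this
      simp [P]
    · have hn1 : 1 ≤ n := by omega
      obtain ⟨s, hs⟩ := ih hn1
      refine ⟨(1 + X * s) * (2 + X + X ^ 2 * s), ?_⟩
      have hP : P (n + 1 + 1) = P (n + 1) ^ 2 + X := rfl
      have h1 : P (n + 1) = X + X ^ 2 + X ^ 3 * s := by linear_combination hs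
      rw [hP, h1]; ring

lemma key (m : ℕ) : ∀ n, 1 ≤ n →
    X ^ (m + 3) ∣ Q (m + 1) n - C ((2 : ℤ) ^ m) * X ^ (m + 2) := by
  induction m with
  | zero =>
    intro n hn
    obtain ⟨s, hs⟩ := base_aux n hn
    refine ⟨s, ?_⟩
    have hQ : Q 1 n = P (n + 1) - X := by
      simp [Q, Nat.add_comm 1 n, P]
    rw [hQ]
    simpa using by linear_combination hs
  | succ m ih =>
    intro n hn
    obtain ⟨a, ha⟩ := ih n hn
    obtain ⟨b, hb⟩ := P_sub_X (m + 1) (by omega)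
    have hq : Q (m + 1) n = C ((2:ℤ) ^ m) * X ^ (m + 2) + X ^ (m + 3) * a := by
      linear_combination ha
    have hp : P (m + 1) = X + X ^ 2 * b := by linear_combination hb
    have hQ : Q (m + 2) n = Q (m + 1) n * (Q (m + 1) n + 2 * P (m + 1)) := by
      have h1 : m + 2 + n = (m + 1 + n) + 1 := by omega
      have h2 : P ((m + 1 + n) + 1) = P (m + 1 + n) ^ 2 + X := rfl
      have h3 : P (m + 2) = P (m + 1) ^ 2 + X := rfl
      unfold Q
      rw [h1, h2, h3]; ring
    refine ⟨C ((2:ℤ)^m) ^ 2 * X ^ m + C ((2:ℤ)^m) * X ^ (m + 1) * a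
      + 2 * C ((2:ℤ)^m) * b
      + a * (C ((2:ℤ)^m) * X ^ (m + 1) + X ^ (m + 2) * a + 2 + 2 * X * b), ?_⟩
    rw [hQ, hq, hp]
    have h2 : C ((2:ℤ) ^ (m + 1)) = 2 * C ((2:ℤ) ^ m) := by
      rw [pow_succ, C_mul]; simp [mul_comm]
    rw [h2]; ring

/-- For `l ≥ 1` and `n ≥ 1`, `q l n ≡ 2^(l-1) z^(l+1)  [mod z^(l+2)]`; consequently,
`0` is a root of `q l n` of multiplicity exactly `l + 1`. -/
theorem q_order_at_zero (l n : ℕ) (hl : 1 ≤ l) (hn : 1 ≤ n) :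
    X ^ (l + 2) ∣ Q l n - C ((2 : ℤ) ^ (l - 1)) * X ^ (l + 1) ∧
    (Q l n).rootMultiplicity 0 = l + 1 := by
  obtain ⟨m, rfl⟩ := Nat.exists_eq_add_of_le hl
  have hkey := key m n hn
  have hm1 : 1 + m - 1 = m := by omega
  have hd : X ^ (1 + m + 2) ∣ Q (1 + m) n - C ((2 : ℤ) ^ (1 + m - 1)) * X ^ (1 + m + 1) := by
    have e1 : 1 + m + 2 = m + 3 := by omega
    have e2 : 1 + m + 1 = m + 2 := by omega
    have e3 : 1 + m = m + 1 := by omega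
    rw [hm1, e1, e2, e3]; exact hkey
  refine ⟨hd, ?_⟩
  obtain ⟨r, hr⟩ := key m n hn
  have e3 : 1 + m = m + 1 := by omega
  rw [e3]
  have hfac : Q (m + 1) n = X ^ (m + 2) * (C ((2:ℤ)^m) + X * r) := by
    have : (X : Polynomial ℤ) ^ (m + 3) = X ^ (m + 2) * X := by ring
    rw [this] at hr
    linear_combination hr
  have hg0 : (C ((2:ℤ)^m) + X * r).eval 0 ≠ 0 := by
    simp [pow_ne_zero]
  have hg : (C ((2:ℤ)^m) + X * r) ≠ 0 := fun h => hg0 (by rw [h]; simp)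
  have hX : (X : Polynomial ℤ) ^ (m + 2) ≠ 0 := pow_ne_zero _ X_ne_zero
  rw [hfac, rootMultiplicity_mul (mul_ne_zero hX hg)]
  have h1 : ((X : Polynomial ℤ) ^ (m + 2)).rootMultiplicity 0 = m + 2 := by
    have h := rootMultiplicity_X_sub_C_pow (0 : ℤ) (m + 2)
    simpa using h
  have h2 : (C ((2:ℤ)^m) + X * r).rootMultiplicity 0 = 0 :=
    by exact rootMultiplicity_eq_zero hg0
  rw [h1, h2]
end
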